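/- Let N be a positive integer and let A, Ω be real numbers. For u(τ,x) = A·cos τ·sin(N x), the Galerkin projection identity ∫₀^{2π} ∫₀^π [ Ω² ∂²_τ u(τ,x) − ∂²_x u(τ,x) + u(τ,x)³/sin²x ] · cos τ · sin(N x) dx dτ = (π²/8)·A·(3N·A² − 4Ω² + 4N²) holds. -/

import Mathlib

open Real Set intervalIntegral MeasureTheory Finset

/-!
Since `∂²_τ u = -u` and `∂²_x u = -N² u`, the linear part of the residual projects to
`(N² - Ω²) A ∫∫ cos² τ sin² (N x) = (π² / 2) (N² - Ω²) A`.
For the cubic part, `sin² (N x) = sin x · ∑_{k < N} sin ((2k+1) x)` turns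
`sin⁴ (N x) / sin² x` into the square of a sum of `N` mutually orthogonal odd sine modes, whose
integral over `[0, π]` is `N π / 2`; together with `∫₀^{2π} cos⁴ = 3π/4` this gives
`(3π² / 8) N A³`.
-/

lemma deriv_deriv_mul_cos_mul (a c t : ℝ) :
    deriv (deriv fun s => a * cos s * c) t = -(a * cos t * c) := by
  simp

lemma deriv_deriv_mul_sin_mul (a c y : ℝ) :
    deriv (deriv fun z => a * sin (c * z)) y = -(c ^ 2 * (a * sin (c * y))) := by
  have hsin : deriv (fun y => sin (c * y)) = fun y => c * cos (c * y) := by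
    ext y; simpa using deriv_comp_mul_left (f := sin) (c := c) (x := y)
  have hcos : deriv (fun y => cos (c * y)) = fun y => -(c * sin (c * y)) := by
    ext y; simpa using deriv_comp_mul_left (f := cos) (c := c) (x := y)
  simp only [deriv_const_mul_field', hsin, hcos]
  ring

lemma integral_cos_int_mul_eq_zero {m : ℤ} (hm : m ≠ 0) :
    ∫ x in (0 : ℝ)..π, cos (m * x) = 0 := by
  have hm' : (m : ℝ) ≠ 0 := Int.cast_ne_zero.2 hm
  simp [integral_comp_mul_left (fun x => cos x) hm', sin_int_mul_pi]

lemma integral_sin_nat_mul_mul_sin_nat_mul {m n : ℕ} (hm : m ≠ 0) :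
    ∫ x in (0 : ℝ)..π, sin (m * x) * sin (n * x) = if m = n then π / 2 else 0 := by
  have hprod : ∀ x : ℝ, sin (m * x) * sin (n * x)
      = (cos (((m - n : ℤ) : ℝ) * x) - cos (((m + n : ℤ) : ℝ) * x)) / 2 := by
    intro x
    push_cast
    rw [sub_mul, add_mul, cos_sub, cos_add]
    ring
  have hcont : ∀ c : ℝ, Continuous fun x : ℝ => cos (c * x) := fun c => by fun_prop
  simp_rw [hprod]
  rw [intervalIntegral.integral_div, integral_sub ((hcont _).intervalIntegrable _ _)
    ((hcont _).intervalIntegrable _ _), integral_cos_int_mul_eq_zero (m := m + n) (by omega)]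
  split_ifs with hmn
  · simp [hmn]
  · rw [integral_cos_int_mul_eq_zero (m := m - n) (by omega)]
    simp

lemma sin_nat_mul_sq_eq_sin_mul_sum (n : ℕ) (x : ℝ) :
    sin (n * x) ^ 2 = sin x * ∑ k ∈ range n, sin ((2 * k + 1 : ℕ) * x) := by
  induction n with
  | zero => simp
  | succ n ih =>
    rw [sum_range_succ, mul_add, ← ih]
    push_cast
    rw [show ((n : ℝ) + 1) * x = n * x + x by ring,
      show (2 * (n : ℝ) + 1) * x = 2 * (n * x) + x by ring,
      sin_add, sin_add, sin_two_mul, cos_two_mul]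
    nlinarith [sin_sq_add_cos_sq (n * x), sin_sq_add_cos_sq x]

lemma ae_sin_ne_zero : ∀ᵐ x : ℝ, sin x ≠ 0 := by
  refine measure_mono_null (fun x hx => ?_)
    ((countable_range fun n : ℤ => (n : ℝ) * π).measure_zero _)
  exact sin_eq_zero_iff.1 (not_not.1 hx)

lemma sin_nat_mul_pow_four_div_sin_sq_ae_eq (n : ℕ) :
    (fun x => sin (n * x) ^ 4 / sin x ^ 2)
      =ᵐ[volume] fun x => (∑ k ∈ range n, sin ((2 * k + 1 : ℕ) * x)) ^ 2 := by
  filter_upwards [ae_sin_ne_zero] with x hx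
  rw [show sin (n * x) ^ 4 = (sin (n * x) ^ 2) ^ 2 by ring, sin_nat_mul_sq_eq_sin_mul_sum,
    mul_pow, mul_div_cancel_left₀ _ (pow_ne_zero 2 hx)]

lemma integral_sum_sin_odd_mul_sq (n : ℕ) :
    ∫ x in (0 : ℝ)..π, (∑ k ∈ range n, sin ((2 * k + 1 : ℕ) * x)) ^ 2 = n * π / 2 := by
  have hcont : ∀ j k : ℕ,
      Continuous fun x : ℝ => sin ((2 * j + 1 : ℕ) * x) * sin ((2 * k + 1 : ℕ) * x) :=
    fun j k => by fun_prop
  simp_rw [sq, sum_mul_sum]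
  rw [integral_finsetSum fun j _ =>
    (continuous_finsetSum _ fun k _ => hcont j k).intervalIntegrable _ _]
  simp_rw [integral_finsetSum fun k _ => (hcont _ k).intervalIntegrable 0 π,
    integral_sin_nat_mul_mul_sin_nat_mul (Nat.succ_ne_zero _)]
  simp only [Nat.succ_eq_add_one, Nat.add_right_cancel_iff, mul_eq_mul_left_iff,
    OfNat.ofNat_ne_zero, or_false, sum_ite_eq]
  rw [sum_ite_mem, Finset.inter_self, sum_const, card_range, nsmul_eq_mul]
  ring

lemma intervalIntegrable_sin_nat_mul_pow_four_div_sin_sq (n : ℕ) :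
    IntervalIntegrable (fun x => sin (n * x) ^ 4 / sin x ^ 2) volume 0 π :=
  Continuous.intervalIntegrable (by fun_prop) _ _ |>.congr_ae
    (ae_restrict_of_ae (sin_nat_mul_pow_four_div_sin_sq_ae_eq n).symm)

lemma integral_sin_nat_mul_pow_four_div_sin_sq (n : ℕ) :
    ∫ x in (0 : ℝ)..π, sin (n * x) ^ 4 / sin x ^ 2 = n * π / 2 := by
  rw [integral_congr_ae ((sin_nat_mul_pow_four_div_sin_sq_ae_eq n).mono fun _ h _ => h),
    integral_sum_sin_odd_mul_sq]

lemma integral_sin_nat_mul_sq {n : ℕ} (hn : n ≠ 0) :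
    ∫ x in (0 : ℝ)..π, sin (n * x) ^ 2 = π / 2 := by
  simpa [sq] using integral_sin_nat_mul_mul_sin_nat_mul (n := n) hn

lemma integral_cos_sq_zero_two_pi : ∫ t in (0 : ℝ)..2 * π, cos t ^ 2 = π := by
  simp [integral_cos_sq]

lemma integral_cos_pow_four_zero_two_pi : ∫ t in (0 : ℝ)..2 * π, cos t ^ 4 = 3 * π / 4 := by
  rw [integral_cos_pow (n := 2), integral_cos_sq_zero_two_pi]
  norm_num
  ring

lemma residual_mul_mode_eq (N A Ω τ x : ℝ) :
    (Ω ^ 2 * deriv (deriv fun t => A * cos t * sin (N * x)) τ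
        - deriv (deriv fun y => A * cos τ * sin (N * y)) x
        + (A * cos τ * sin (N * x)) ^ 3 / sin x ^ 2) * cos τ * sin (N * x)
      = (N ^ 2 - Ω ^ 2) * A * cos τ ^ 2 * sin (N * x) ^ 2
        + A ^ 3 * cos τ ^ 4 * (sin (N * x) ^ 4 / sin x ^ 2) := by
  rw [deriv_deriv_mul_cos_mul, deriv_deriv_mul_sin_mul]
  ring

/-- the one-mode Galerkin projection identity. -/
theorem one_mode_galerkin (N : ℕ) (hN : 0 < N) (A Ω : ℝ) :
    (∫ τ in (0:ℝ)..(2 * π), ∫ x in (0:ℝ)..π,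
        (Ω ^ 2 * deriv (deriv (fun t => A * Real.cos t * Real.sin (N * x))) τ
          - deriv (deriv (fun y => A * Real.cos τ * Real.sin (N * y))) x
          + (A * Real.cos τ * Real.sin (N * x)) ^ 3 / (Real.sin x) ^ 2)
        * Real.cos τ * Real.sin (N * x))
      = (π ^ 2 / 8) * A * (3 * N * A ^ 2 - 4 * Ω ^ 2 + 4 * N ^ 2) := by
  have hinner : ∀ τ : ℝ,
      ∫ x in (0 : ℝ)..π, ((N : ℝ) ^ 2 - Ω ^ 2) * A * cos τ ^ 2 * sin (N * x) ^ 2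
        + A ^ 3 * cos τ ^ 4 * (sin (N * x) ^ 4 / sin x ^ 2)
      = ((N : ℝ) ^ 2 - Ω ^ 2) * A * (π / 2) * cos τ ^ 2
        + A ^ 3 * (N * π / 2) * cos τ ^ 4 := by
    intro τ
    rw [intervalIntegral.integral_add (Continuous.intervalIntegrable (by fun_prop) _ _)
        ((intervalIntegrable_sin_nat_mul_pow_four_div_sin_sq N).const_mul _),
      intervalIntegral.integral_const_mul, intervalIntegral.integral_const_mul,
      integral_sin_nat_mul_sq hN.ne', integral_sin_nat_mul_pow_four_div_sin_sq]
    ring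
  simp_rw [residual_mul_mode_eq, hinner]
  rw [intervalIntegral.integral_add (Continuous.intervalIntegrable (by fun_prop) _ _)
      (Continuous.intervalIntegrable (by fun_prop) _ _),
    intervalIntegral.integral_const_mul, intervalIntegral.integral_const_mul,
    integral_cos_sq_zero_two_pi, integral_cos_pow_four_zero_two_pi]
  ring
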